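/- The group generated by the matrices S, T, U, X in GL(6, ℤ) is isomorphic to the direct product (S3 ≀ S2) × S2, where S3 ≀ S2 denotes the wreath product of S3 by S2 (of order 72). -/
import Mathlib


/- The matrices of the linear maps `S, T, U, X` of `ℤ^6` (coordinates
`(λ1, λ2, μ1, μ2, ν1, ν2)`, with `ν3 = λ1 + λ2 + μ1 + μ2 − ν1 − ν2`):
`S : (λ1, λ2, μ1, μ2, ν1, ν2) ↦ (μ1, μ2, λ1, λ2, ν1, ν2)`,
`U : (λ1, λ2, μ1, μ2, ν1, ν2) ↦ (ν1 − ν3, ν1 − ν2, μ1, μ2, ν1, ν1 − λ2)`,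
`T : (λ1, λ2, μ1, μ2, ν1, ν2) ↦ (λ1, λ1 − λ2, μ1, μ1 − μ2, λ1 + μ1 − ν3, λ1 + μ1 − ν2)`,
`X : (λ1, λ2, μ1, μ2, ν1, ν2) ↦ (λ1 + μ1 − ν2, λ2 + μ1 − ν2, ν2, μ2, ν1, μ1)`. -/

def SMat : Matrix (Fin 6) (Fin 6) ℤ :=
  !![0,0,1,0,0,0; 0,0,0,1,0,0; 1,0,0,0,0,0; 0,1,0,0,0,0; 0,0,0,0,1,0; 0,0,0,0,0,1]

def UMat : Matrix (Fin 6) (Fin 6) ℤ :=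
  !![-1,-1,-1,-1,2,1; 0,0,0,0,1,-1; 0,0,1,0,0,0; 0,0,0,1,0,0; 0,0,0,0,1,0; 0,-1,0,0,1,0]

def TMat : Matrix (Fin 6) (Fin 6) ℤ :=
  !![1,0,0,0,0,0; 1,-1,0,0,0,0; 0,0,1,0,0,0; 0,0,1,-1,0,0; 0,-1,0,-1,1,1; 1,0,1,0,0,-1]

def XMat : Matrix (Fin 6) (Fin 6) ℤ :=
  !![1,0,1,0,0,-1; 0,1,1,0,0,-1; 0,0,0,0,0,1; 0,0,0,1,0,0; 0,0,0,0,1,0; 0,0,1,0,0,0]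

def Sgl : GL (Fin 6) ℤ := ⟨SMat, SMat, by decide, by decide⟩
def Ugl : GL (Fin 6) ℤ := ⟨UMat, UMat, by decide, by decide⟩
def Tgl : GL (Fin 6) ℤ := ⟨TMat, TMat, by decide, by decide⟩
def Xgl : GL (Fin 6) ℤ := ⟨XMat, XMat, by decide, by decide⟩

/-- The natural action of `Perm α` on `α → G` (permutation of coordinates),
as a homomorphism into the automorphisms of the direct power `α → G`. -/
def permAut (α : Type*) (G : Type*) [Group G] : Equiv.Perm α →* MulAut (α → G) where
  toFun σ :=
    { toFun := fun f => f ∘ σ.symm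
      invFun := fun f => f ∘ σ
      left_inv := fun f => funext fun x => congrArg f (σ.symm_apply_apply x)
      right_inv := fun f => funext fun x => congrArg f (σ.apply_symm_apply x)
      map_mul' := fun _ _ => rfl }
  map_one' := rfl
  map_mul' := fun _ _ => rfl

/-- The wreath product `S3 ≀ S2 = (S3 × S3) ⋊ S2` (of order 72), realized as
`(Fin 2 → Perm (Fin 3)) ⋊ Perm (Fin 2)` with `S2` permuting the two copies. -/
abbrev WreathS3S2 : Type :=
  SemidirectProduct (Fin 2 → Equiv.Perm (Fin 3)) (Equiv.Perm (Fin 2))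
    (permAut (Fin 2) (Equiv.Perm (Fin 3)))


-- ### Auxiliary construction: an explicit hom `phi : WreathS3S2 × S2 →* GL(6,ℤ)`

/-- The central element `z = S·X·T·X`. -/
def Zgl : GL (Fin 6) ℤ := Sgl * Xgl * Tgl * Xgl

/-- Table of one copy of `S3` inside the matrix group: generated by `S` and `U`. -/
def Afun : Equiv.Perm (Fin 3) → GL (Fin 6) ℤ := fun σ =>
  if σ = Equiv.swap 0 1 then Sgl
  else if σ = Equiv.swap 1 2 then Ugl
  else if σ = Equiv.swap 0 1 * Equiv.swap 1 2 then Sgl * Ugl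
  else if σ = Equiv.swap 1 2 * Equiv.swap 0 1 then Ugl * Sgl
  else if σ = Equiv.swap 0 2 then Sgl * Ugl * Sgl
  else 1

def Ahom : Equiv.Perm (Fin 3) →* GL (Fin 6) ℤ where
  toFun := Afun
  map_one' := by decide
  map_mul' := by decide

/-- The second copy of `S3`: conjugate of the first by `X`. -/
def Bhom : Equiv.Perm (Fin 3) →* GL (Fin 6) ℤ :=
  (MulAut.conj Xgl).toMonoidHom.comp Ahom

set_option maxHeartbeats 2000000 in
lemma BA_comm : ∀ p q : Equiv.Perm (Fin 3), Bhom p * Ahom q = Ahom q * Bhom p := by decide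

/-- The base hom `(S3 × S3) →* GL(6,ℤ)`. -/
def Fhom : (Fin 2 → Equiv.Perm (Fin 3)) →* GL (Fin 6) ℤ where
  toFun f := Ahom (f 0) * Bhom (f 1)
  map_one' := by simp
  map_mul' f g := by
    show Ahom (f 0 * g 0) * Bhom (f 1 * g 1) = _
    rw [map_mul, map_mul, mul_assoc, ← mul_assoc (Ahom (g 0)), ← BA_comm,
      mul_assoc, ← mul_assoc, ← mul_assoc]

def G2hom : Equiv.Perm (Fin 2) →* GL (Fin 6) ℤ where
  toFun σ := if σ = 1 then 1 else Xgl
  map_one' := by decide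
  map_mul' := by decide

set_option maxHeartbeats 2000000 in
/-- The hom from the wreath product. -/
def Whom : WreathS3S2 →* GL (Fin 6) ℤ :=
  SemidirectProduct.lift Fhom G2hom (by
    intro g
    apply MonoidHom.ext
    revert g
    decide)

def Khom : Equiv.Perm (Fin 2) →* GL (Fin 6) ℤ where
  toFun τ := if τ = 1 then 1 else Zgl
  map_one' := by decide
  map_mul' := by decide

set_option maxHeartbeats 4000000 in
lemma inj_aux1 : ∀ s : Equiv.Perm (Fin 2), ∀ p q : Equiv.Perm (Fin 3),
    Ahom p * Bhom q * G2hom s = 1 → p = 1 ∧ q = 1 ∧ s = 1 := by decide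

set_option maxHeartbeats 4000000 in
lemma inj_aux2 : ∀ s : Equiv.Perm (Fin 2), ∀ p q : Equiv.Perm (Fin 3),
    Ahom p * Bhom q * G2hom s * Zgl ≠ 1 := by decide

lemma Whom_apply (x : WreathS3S2) :
    Whom x = Ahom (x.left 0) * Bhom (x.left 1) * G2hom x.right := rfl

set_option maxHeartbeats 2000000 in
lemma Z_comm : ∀ p q : Equiv.Perm (Fin 3), ∀ s : Equiv.Perm (Fin 2),
    Zgl * (Ahom p * Bhom q * G2hom s) = Ahom p * Bhom q * G2hom s * Zgl := by decide

lemma K_comm (τ : Equiv.Perm (Fin 2)) (x : WreathS3S2) :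
    Khom τ * Whom x = Whom x * Khom τ := by
  show (if τ = 1 then 1 else Zgl) * Whom x = Whom x * (if τ = 1 then 1 else Zgl)
  split_ifs
  · simp
  · rw [Whom_apply]; exact Z_comm _ _ _

/-- The full hom from `(S3 ≀ S2) × S2`. -/
def phi : WreathS3S2 × Equiv.Perm (Fin 2) →* GL (Fin 6) ℤ where
  toFun p := Whom p.1 * Khom p.2
  map_one' := by simp
  map_mul' p q := by
    show Whom (p.1 * q.1) * Khom (p.2 * q.2) = Whom p.1 * Khom p.2 * (Whom q.1 * Khom q.2)
    rw [map_mul, map_mul, mul_assoc, ← mul_assoc (Whom q.1), ← K_comm, mul_assoc, ← mul_assoc]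

lemma phi_apply (x : WreathS3S2 × Equiv.Perm (Fin 2)) :
    phi x = Ahom (x.1.left 0) * Bhom (x.1.left 1) * G2hom x.1.right * Khom x.2 := rfl

lemma phi_injective : Function.Injective phi := by
  apply (injective_iff_map_eq_one phi).2
  rintro ⟨⟨f, σ⟩, τ⟩ h
  have h' : Ahom (f 0) * Bhom (f 1) * G2hom σ * Khom τ = 1 := h
  by_cases ht : τ = 1
  · subst ht
    rw [show Khom 1 = 1 from rfl, mul_one] at h'
    obtain ⟨h0, h1, h2⟩ := inj_aux1 _ _ _ h'
    refine Prod.ext ?_ rfl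
    refine SemidirectProduct.ext ?_ h2
    funext i
    fin_cases i
    · exact h0
    · exact h1
  · exfalso
    have hk : Khom τ = Zgl := by
      show (if τ = 1 then 1 else Zgl) = Zgl
      rw [if_neg ht]
    rw [hk] at h'
    exact inj_aux2 _ _ _ h'

lemma mem_A (p : Equiv.Perm (Fin 3)) :
    Ahom p ∈ Subgroup.closure {Sgl, Tgl, Ugl, Xgl} := by
  have hS : Sgl ∈ Subgroup.closure {Sgl, Tgl, Ugl, Xgl} :=
    Subgroup.subset_closure (by simp)
  have hU : Ugl ∈ Subgroup.closure {Sgl, Tgl, Ugl, Xgl} :=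
    Subgroup.subset_closure (by simp)
  show Afun p ∈ _
  unfold Afun
  split_ifs
  · exact hS
  · exact hU
  · exact mul_mem hS hU
  · exact mul_mem hU hS
  · exact mul_mem (mul_mem hS hU) hS
  · exact one_mem _

lemma mem_X : Xgl ∈ Subgroup.closure {Sgl, Tgl, Ugl, Xgl} :=
  Subgroup.subset_closure (by simp)

lemma mem_Z : Zgl ∈ Subgroup.closure {Sgl, Tgl, Ugl, Xgl} := by
  have hS : Sgl ∈ Subgroup.closure {Sgl, Tgl, Ugl, Xgl} :=
    Subgroup.subset_closure (by simp)
  have hT : Tgl ∈ Subgroup.closure {Sgl, Tgl, Ugl, Xgl} :=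
    Subgroup.subset_closure (by simp)
  exact mul_mem (mul_mem (mul_mem hS mem_X) hT) mem_X

lemma range_le : phi.range ≤ Subgroup.closure {Sgl, Tgl, Ugl, Xgl} := by
  rintro _ ⟨x, rfl⟩
  rw [phi_apply]
  refine mul_mem (mul_mem (mul_mem (mem_A _) ?_) ?_) ?_
  · show Xgl * Ahom (x.1.left 1) * Xgl⁻¹ ∈ _
    exact mul_mem (mul_mem mem_X (mem_A _)) (inv_mem mem_X)
  · show (if x.1.right = 1 then 1 else Xgl) ∈ _
    split_ifs
    · exact one_mem _
    · exact mem_X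
  · show (if x.2 = 1 then 1 else Zgl) ∈ _
    split_ifs
    · exact one_mem _
    · exact mem_Z

set_option maxHeartbeats 8000000 in
lemma le_range : Subgroup.closure {Sgl, Tgl, Ugl, Xgl} ≤ phi.range := by
  rw [Subgroup.closure_le]
  rintro g (rfl | rfl | rfl | rfl)
  · exact ⟨(⟨fun i => if i = 0 then Equiv.swap 0 1 else 1, 1⟩, 1), by decide⟩
  · exact ⟨(⟨fun i => if i = 0 then 1 else Equiv.swap 0 1, 1⟩, Equiv.swap 0 1), by decide⟩
  · exact ⟨(⟨fun i => if i = 0 then Equiv.swap 1 2 else 1, 1⟩, 1), by decide⟩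
  · exact ⟨(⟨1, Equiv.swap 0 1⟩, 1), by decide⟩

theorem STUX_group_iso_wreath_times_S2 :
    Nonempty ((Subgroup.closure {Sgl, Tgl, Ugl, Xgl} : Subgroup (GL (Fin 6) ℤ)) ≃*
      WreathS3S2 × Equiv.Perm (Fin 2)) := by
  have h : (Subgroup.closure {Sgl, Tgl, Ugl, Xgl} : Subgroup (GL (Fin 6) ℤ)) = phi.range :=
    le_antisymm le_range range_le
  exact ⟨(MulEquiv.subgroupCongr h).trans (MonoidHom.ofInjective phi_injective).symm⟩
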